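/- Let L be a set of m lines in ℝ². For any triangle t ⊆ ℝ², the set of lines of L intersecting t equals the set of lines of L intersecting the convex hull of three cells of the arrangement of L (the cells containing the vertices of t); since the arrangement of m lines has O(m²) cells, the number of distinct subsets of L realizable as {ℓ ∈ L : ℓ ∩ t ≠ ∅} over all triangles t is at most O(m⁶). -/

import Mathlib

open Classical in
lemma sign_transfer {d u u' : ℝ} (hd : d ≠ 0) (h1 : 0 < u ↔ 0 < u') (h2 : u = 0 ↔ u' = 0) :
    (0 < d * u ↔ 0 < d * u') ∧ (d * u = 0 ↔ d * u' = 0) := by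
  have h3 : u < 0 ↔ u' < 0 := by
    constructor <;> intro h
    · rcases lt_trichotomy 0 u' with h' | h' | h'
      · exact absurd (h1.mpr h') (by linarith)
      · exact absurd (h2.mpr h'.symm) (by intro hh; linarith)
      · exact h'
    · rcases lt_trichotomy 0 u with h' | h' | h'
      · exact absurd (h1.mp h') (by linarith)
      · exact absurd (h2.mp h'.symm) (by intro hh; linarith)
      · exact h'
  constructor
  · rw [mul_pos_iff, mul_pos_iff, h1, h3]
  · simp [mul_eq_zero, hd, h2]

open Classical in
lemma oneD {ι : Type*} (F : Finset ι) (c d : ι → ℝ) :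
    (Set.range (fun t : ℝ =>
      (F.filter (fun i => 0 < c i + t * d i), F.filter (fun i => c i + t * d i = 0)))).ncard
      ≤ 2 * (F.card + 1) := by
  classical
  set R : Finset ℝ := (F.filter (fun i => d i ≠ 0)).image (fun i => -(c i) / d i) with hR
  set θ : ℝ → ℕ × Bool := fun t => ((R.filter (fun r => r < t)).card, decide (t ∈ R)) with hθ
  set Q : ℝ → Finset ι × Finset ι := fun t =>
      (F.filter (fun i => 0 < c i + t * d i), F.filter (fun i => c i + t * d i = 0)) with hQ
  have key : ∀ s t : ℝ, θ s = θ t → Q s = Q t := by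
    intro s t h
    have hcard : (R.filter (fun r => r < s)).card = (R.filter (fun r => r < t)).card :=
      congrArg Prod.fst h
    have hmem : s ∈ R ↔ t ∈ R := by
      have := congrArg Prod.snd h
      simpa [hθ] using this
    have hset : R.filter (fun r => r < s) = R.filter (fun r => r < t) := by
      rcases le_total s t with hst | hst
      · exact Finset.eq_of_subset_of_card_le
          (Finset.monotone_filter_right R (fun r _ hr => lt_of_lt_of_le hr hst)) hcard.ge
      · exact (Finset.eq_of_subset_of_card_le
          (Finset.monotone_filter_right R (fun r _ hr => lt_of_lt_of_le hr hst)) hcard.le).symm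
    have hRst : s ∈ R → t ∈ R → s = t := by
      intro hs ht
      by_contra hne
      rcases lt_or_gt_of_ne hne with hlt | hlt
      · have h1 : s ∈ R.filter (fun r => r < t) := Finset.mem_filter.2 ⟨hs, hlt⟩
        rw [← hset] at h1
        exact absurd (Finset.mem_filter.1 h1).2 (lt_irrefl s)
      · have h1 : t ∈ R.filter (fun r => r < s) := Finset.mem_filter.2 ⟨ht, hlt⟩
        rw [hset] at h1
        exact absurd (Finset.mem_filter.1 h1).2 (lt_irrefl t)
    have hcomp : ∀ r ∈ R, (r < s ↔ r < t) ∧ (r = s ↔ r = t) := by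
      intro r hr
      constructor
      · constructor <;> intro hlt
        · have : r ∈ R.filter (fun r => r < s) := Finset.mem_filter.2 ⟨hr, hlt⟩
          rw [hset] at this; exact (Finset.mem_filter.1 this).2
        · have : r ∈ R.filter (fun r => r < t) := Finset.mem_filter.2 ⟨hr, hlt⟩
          rw [← hset] at this; exact (Finset.mem_filter.1 this).2
      · constructor <;> intro he
        · subst he
          exact hRst hr (hmem.1 hr)
        · subst he
          exact (hRst (hmem.2 hr) hr).symm
    have hiff : ∀ i ∈ F, (0 < c i + s * d i ↔ 0 < c i + t * d i) ∧
        (c i + s * d i = 0 ↔ c i + t * d i = 0) := by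
      intro i hi
      by_cases hd : d i = 0
      · simp [hd]
      · set r : ℝ := -(c i) / d i with hr
        have hrR : r ∈ R := Finset.mem_image.2 ⟨i, Finset.mem_filter.2 ⟨hi, hd⟩, rfl⟩
        obtain ⟨hc1, hc2⟩ := hcomp r hrR
        have es : c i + s * d i = d i * (s - r) := by rw [hr]; field_simp; ring
        have et : c i + t * d i = d i * (t - r) := by rw [hr]; field_simp; ring
        rw [es, et]
        apply sign_transfer hd
        · constructor <;> intro hh
          · have : r < s := by linarith
            linarith [hc1.1 this]
          · have : r < t := by linarith
            linarith [hc1.2 this]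
        · constructor <;> intro hh
          · have : r = s := by linarith
            linarith [(hc2.1 this ▸ rfl : r = t)]
          · have : r = t := by linarith
            linarith [(hc2.2 this ▸ rfl : r = s)]
    refine Prod.ext ?_ ?_ <;> simp only [hQ] <;>
      [ exact Finset.filter_congr (fun i hi => (hiff i hi).1);
        exact Finset.filter_congr (fun i hi => (hiff i hi).2) ]
  -- factor Q through θ
  set G : ℕ × Bool → Finset ι × Finset ι :=
    fun p => if h : ∃ t, θ t = p then Q h.choose else (∅, ∅) with hG
  have hQG : Q = G ∘ θ := by
    funext t
    have h : ∃ s, θ s = θ t := ⟨t, rfl⟩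
    simp only [hG, Function.comp, dif_pos h]
    exact key _ _ h.choose_spec.symm
  have hsub : Set.range θ ⊆ ↑(Finset.range (F.card + 1) ×ˢ (Finset.univ : Finset Bool)) := by
    rintro _ ⟨t, rfl⟩
    simp only [Finset.coe_product, Set.mem_prod, Finset.mem_coe, Finset.mem_range]
    refine ⟨Nat.lt_succ_of_le ?_, Finset.mem_univ _⟩
    calc (R.filter (fun r => r < t)).card ≤ R.card := Finset.card_filter_le _ _
      _ ≤ (F.filter (fun i => d i ≠ 0)).card := Finset.card_image_le
      _ ≤ F.card := Finset.card_filter_le _ _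
  have hfinθ : (Set.range θ).Finite :=
    Set.Finite.subset (Finset.finite_toSet _) hsub
  calc (Set.range Q).ncard = (G '' Set.range θ).ncard := by rw [hQG, Set.range_comp]
    _ ≤ (Set.range θ).ncard := Set.ncard_image_le hfinθ
    _ ≤ (↑(Finset.range (F.card + 1) ×ˢ (Finset.univ : Finset Bool)) : Set (ℕ × Bool)).ncard :=
        Set.ncard_le_ncard hsub (Finset.finite_toSet _)
    _ = 2 * (F.card + 1) := by
        rw [Set.ncard_coe_finset, Finset.card_product]
        simp [mul_comm]
open scoped RealInnerProductSpace

local notation "E2" => EuclideanSpace ℝ (Fin 2)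

lemma inner_two (a x : E2) : ⟪a, x⟫ = a 0 * x 0 + a 1 * x 1 := by
  simp [PiLp.inner_apply, Fin.sum_univ_two, RCLike.inner_apply, mul_comm]

lemma affine_inner (a x y : E2) (t : ℝ) :
    ⟪a, x + t • (y - x)⟫ = ⟪a, x⟫ + t * (⟪a, y⟫ - ⟪a, x⟫) := by
  rw [inner_add_right, real_inner_smul_right, inner_sub_right]

lemma param_line (a : E2) (ha : a ≠ 0) (b : ℝ) :
    ∃ x₀ v : E2, ∀ x : E2, ⟪a, x⟫ = b → ∃ t : ℝ, x = x₀ + t • v := by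
  have hcoord : a 0 ≠ 0 ∨ a 1 ≠ 0 := by
    by_contra h
    push_neg at h
    exact ha (by ext i; fin_cases i <;> simp [h.1, h.2])
  have hs : (0:ℝ) < a 0 ^ 2 + a 1 ^ 2 := by
    rcases hcoord with h | h
    · have := pow_pos (abs_pos.2 h) 2
      nlinarith [sq_nonneg (a 1), sq_abs (a 0)]
    · have := pow_pos (abs_pos.2 h) 2
      nlinarith [sq_nonneg (a 0), sq_abs (a 1)]
  set s : ℝ := a 0 ^ 2 + a 1 ^ 2 with hsdef
  refine ⟨(b / s) • a, (EuclideanSpace.equiv (Fin 2) ℝ).symm ![-(a 1), a 0], fun x hx => ?_⟩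
  have hx' : a 0 * x 0 + a 1 * x 1 = b := by rw [← inner_two]; exact hx
  refine ⟨(a 0 * (x 1 - (b / s) * a 1) - a 1 * (x 0 - (b / s) * a 0)) / s, ?_⟩
  have hv0 : ((EuclideanSpace.equiv (Fin 2) ℝ).symm ![-(a 1), a 0]) 0 = -(a 1) := rfl
  have hv1 : ((EuclideanSpace.equiv (Fin 2) ℝ).symm ![-(a 1), a 0]) 1 = a 0 := rfl
  have hs' : a 0 ^ 2 + a 1 ^ 2 ≠ 0 := ne_of_gt (by rw [hsdef] at hs; exact hs)
  ext i
  fin_cases i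
  · simp only [Fin.zero_eta, Fin.mk_one, PiLp.add_apply, PiLp.smul_apply, smul_eq_mul, hv0, hv1]
    rw [hsdef]
    field_simp
    linear_combination ((a 0 ^ 2 + a 1 ^ 2) * a 0) * hx'
  · simp only [Fin.zero_eta, Fin.mk_one, PiLp.add_apply, PiLp.smul_apply, smul_eq_mul, hv0, hv1]
    rw [hsdef]
    field_simp
    linear_combination ((a 0 ^ 2 + a 1 ^ 2) * a 1) * hx'

open Classical in
noncomputable def Pv (F : Finset (E2 × ℝ)) (x : E2) :
    Finset (E2 × ℝ) × Finset (E2 × ℝ) :=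
  (F.filter (fun ab => 0 < ⟪ab.1, x⟫ - ab.2), F.filter (fun ab => ⟪ab.1, x⟫ - ab.2 = 0))

open Classical in
lemma Pv_mid (F : Finset (E2 × ℝ)) (a : E2) (b : ℝ) (x y : E2)
    (hxy : Pv F x = Pv F y) (hx : 0 < ⟪a, x⟫ - b) (hy : ⟪a, y⟫ - b < 0) :
    ∃ z : E2, ⟪a, z⟫ - b = 0 ∧ Pv F z = Pv F x := by
  set fx : ℝ := ⟪a, x⟫ - b with hfx
  set fy : ℝ := ⟪a, y⟫ - b with hfy
  have hden : fx - fy ≠ 0 := ne_of_gt (by linarith)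
  set θ : ℝ := fx / (fx - fy) with hθdef
  have hθ0 : 0 < θ := div_pos hx (by linarith)
  have hθ1 : θ < 1 := by
    rw [hθdef, div_lt_one (by linarith)]
    linarith
  refine ⟨x + θ • (y - x), ?_, ?_⟩
  · rw [affine_inner]
    have heq : ⟪a, x⟫ + θ * (⟪a, y⟫ - ⟪a, x⟫) - b = fx + θ * (fy - fx) := by
      rw [hfx, hfy]; ring
    rw [heq, hθdef]
    field_simp
    ring
  · have hfilters := Prod.mk.injEq .. ▸ hxy
    have h1 : F.filter (fun ab => 0 < ⟪ab.1, x⟫ - ab.2) = F.filter (fun ab => 0 < ⟪ab.1, y⟫ - ab.2) :=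
      congrArg Prod.fst hxy
    have h2 : F.filter (fun ab => ⟪ab.1, x⟫ - ab.2 = 0) = F.filter (fun ab => ⟪ab.1, y⟫ - ab.2 = 0) :=
      congrArg Prod.snd hxy
    have key : ∀ cd ∈ F, (0 < ⟪cd.1, x + θ • (y - x)⟫ - cd.2 ↔ 0 < ⟪cd.1, x⟫ - cd.2) ∧
        (⟪cd.1, x + θ • (y - x)⟫ - cd.2 = 0 ↔ ⟪cd.1, x⟫ - cd.2 = 0) := by
      intro cd hcd
      have hgz : ⟪cd.1, x + θ • (y - x)⟫ - cd.2 =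
          (1 - θ) * (⟪cd.1, x⟫ - cd.2) + θ * (⟪cd.1, y⟫ - cd.2) := by
        rw [affine_inner]; ring
      have hpos : 0 < ⟪cd.1, x⟫ - cd.2 ↔ 0 < ⟪cd.1, y⟫ - cd.2 := by
        constructor <;> intro h
        · have := Finset.mem_filter.1 (h1 ▸ Finset.mem_filter.2 ⟨hcd, h⟩)
          exact this.2
        · have := Finset.mem_filter.1 (h1.symm ▸ Finset.mem_filter.2 ⟨hcd, h⟩)
          exact this.2
      have hzer : ⟪cd.1, x⟫ - cd.2 = 0 ↔ ⟪cd.1, y⟫ - cd.2 = 0 := by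
        constructor <;> intro h
        · have := Finset.mem_filter.1 (h2 ▸ Finset.mem_filter.2 ⟨hcd, h⟩)
          exact this.2
        · have := Finset.mem_filter.1 (h2.symm ▸ Finset.mem_filter.2 ⟨hcd, h⟩)
          exact this.2
      rw [hgz]
      rcases lt_trichotomy (⟪cd.1, x⟫ - cd.2) 0 with hgx | hgx | hgx
      · have hgy : ⟪cd.1, y⟫ - cd.2 < 0 := by
          rcases lt_trichotomy (⟪cd.1, y⟫ - cd.2) 0 with h | h | h
          · exact h
          · exact absurd (hzer.2 h) (by intro hh; linarith)
          · exact absurd (hpos.2 h) (by intro hh; linarith)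
        constructor <;> constructor <;> intro h <;> nlinarith
      · have hgy : ⟪cd.1, y⟫ - cd.2 = 0 := hzer.1 hgx
        rw [hgx, hgy]
        constructor <;> constructor <;> intro h <;> nlinarith
      · have hgy : 0 < ⟪cd.1, y⟫ - cd.2 := hpos.1 hgx
        constructor <;> constructor <;> intro h <;> nlinarith
    simp only [Pv]
    refine Prod.ext ?_ ?_
    · exact Finset.filter_congr (fun cd hcd => (key cd hcd).1)
    · exact Finset.filter_congr (fun cd hcd => (key cd hcd).2)

open Classical in
lemma Pv_fst (F : Finset (E2 × ℝ)) (x : E2) :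
    (Pv F x).1 = F.filter (fun ab => 0 < ⟪ab.1, x⟫ - ab.2) := rfl

open Classical in
lemma Pv_snd (F : Finset (E2 × ℝ)) (x : E2) :
    (Pv F x).2 = F.filter (fun ab => ⟪ab.1, x⟫ - ab.2 = 0) := rfl

open Classical in
lemma Pv_insert (f : E2 × ℝ) (F : Finset (E2 × ℝ)) (hf : f ∉ F) (x : E2) :
    ((Pv (insert f F) x).1.erase f, (Pv (insert f F) x).2.erase f) = Pv F x := by
  have h1 : (Pv (insert f F) x).1.erase f = (Pv F x).1 := by
    rw [Pv_fst, Pv_fst, Finset.filter_insert]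
    by_cases h : 0 < ⟪f.1, x⟫ - f.2
    · rw [if_pos h]
      exact Finset.erase_insert (fun hc => hf (Finset.mem_of_mem_filter f hc))
    · rw [if_neg h]
      exact Finset.erase_eq_of_notMem (fun hc => hf (Finset.mem_of_mem_filter f hc))
  have h2 : (Pv (insert f F) x).2.erase f = (Pv F x).2 := by
    rw [Pv_snd, Pv_snd, Finset.filter_insert]
    by_cases h : ⟪f.1, x⟫ - f.2 = 0
    · rw [if_pos h]
      exact Finset.erase_insert (fun hc => hf (Finset.mem_of_mem_filter f hc))
    · rw [if_neg h]
      exact Finset.erase_eq_of_notMem (fun hc => hf (Finset.mem_of_mem_filter f hc))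
  exact Prod.ext h1 h2

open Classical in
lemma range_Pv_finite (F : Finset (E2 × ℝ)) : (Set.range (Pv F)).Finite := by
  apply Set.Finite.subset (Finset.finite_toSet (F.powerset ×ˢ F.powerset))
  rintro _ ⟨x, rfl⟩
  simp only [Finset.coe_product, Set.mem_prod, Finset.mem_coe, Finset.mem_powerset]
  exact ⟨Finset.filter_subset _ _, Finset.filter_subset _ _⟩

open Classical in
lemma arr (F : Finset (E2 × ℝ)) :
    (∀ ab ∈ F, ab.1 ≠ 0) → (Set.range (Pv F)).ncard ≤ 3 * F.card ^ 2 + 3 * F.card + 1 := by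
  induction F using Finset.induction_on with
  | empty =>
    intro _
    have : Pv (∅ : Finset (E2 × ℝ)) = fun _ => ((∅ : Finset (E2 × ℝ)), (∅ : Finset (E2 × ℝ))) := by
      funext x; simp [Pv]
    rw [this, Set.range_const]
    simp
  | @insert f F hfF ih =>
    intro hF
    have ha : f.1 ≠ 0 := hF f (Finset.mem_insert_self f F)
    have ihb := ih (fun ab hab => hF ab (Finset.mem_insert_of_mem hab))
    obtain ⟨x₀, v, hpar⟩ := param_line f.1 ha f.2
    -- Finset versions
    set V : Finset (Finset (E2 × ℝ) × Finset (E2 × ℝ)) := (range_Pv_finite F).toFinset with hV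
    set V' : Finset (Finset (E2 × ℝ) × Finset (E2 × ℝ)) :=
      (range_Pv_finite (insert f F)).toFinset with hV'
    set Vz : Finset (Finset (E2 × ℝ) × Finset (E2 × ℝ)) :=
      V.filter (fun σ => ∃ x : E2, ⟪f.1, x⟫ - f.2 = 0 ∧ Pv F x = σ) with hVz
    have hVcard : V.card = (Set.range (Pv F)).ncard := (Set.ncard_eq_toFinset_card _ _).symm
    have hV'card : V'.card = (Set.range (Pv (insert f F))).ncard :=
      (Set.ncard_eq_toFinset_card _ _).symm
    set ρ : Finset (E2 × ℝ) × Finset (E2 × ℝ) → Finset (E2 × ℝ) × Finset (E2 × ℝ) :=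
      fun σ => (σ.1.erase f, σ.2.erase f) with hρ
    have hmaps : ∀ σ' ∈ V', ρ σ' ∈ V := by
      intro σ' hσ'
      rw [hV', Set.Finite.mem_toFinset] at hσ'
      obtain ⟨x, rfl⟩ := hσ'
      rw [hV, Set.Finite.mem_toFinset]
      exact ⟨x, (Pv_insert f F hfF x).symm⟩
    have hfib : V'.card = ∑ σ ∈ V, (V'.filter (fun σ' => ρ σ' = σ)).card :=
      Finset.card_eq_sum_card_fiberwise hmaps
    -- fiber bounds
    have hfib3 : ∀ σ ∈ V, (V'.filter (fun σ' => ρ σ' = σ)).card ≤ 3 := by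
      intro σ hσ
      have hsub : V'.filter (fun σ' => ρ σ' = σ) ⊆
          {(insert f σ.1, σ.2), (σ.1, insert f σ.2), (σ.1, σ.2)} := by
        intro σ' hσ'
        obtain ⟨hσ'V, hρσ'⟩ := Finset.mem_filter.1 hσ'
        rw [hV', Set.Finite.mem_toFinset] at hσ'V
        obtain ⟨x, rfl⟩ := hσ'V
        have hPx : Pv F x = σ := by rw [← hρσ']; exact (Pv_insert f F hfF x).symm
        have h1 : σ.1 = F.filter (fun ab => 0 < ⟪ab.1, x⟫ - ab.2) := by
          rw [← hPx, Pv_fst]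
        have h2 : σ.2 = F.filter (fun ab => ⟪ab.1, x⟫ - ab.2 = 0) := by
          rw [← hPx, Pv_snd]
        simp only [Finset.mem_insert, Finset.mem_singleton]
        rcases lt_trichotomy (⟪f.1, x⟫ - f.2) 0 with hfx | hfx | hfx
        · right; right
          have e1 : ¬ (0 < ⟪f.1, x⟫ - f.2) := by linarith
          have e2 : ¬ (⟪f.1, x⟫ - f.2 = 0) := by intro h; linarith
          simp only [Pv, Finset.filter_insert, if_neg e1, if_neg e2, h1, h2]
        · right; left
          have e1 : ¬ (0 < ⟪f.1, x⟫ - f.2) := by intro h; linarith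
          simp only [Pv, Finset.filter_insert, if_neg e1, if_pos hfx, h1, h2]
        · left
          have e2 : ¬ (⟪f.1, x⟫ - f.2 = 0) := by intro h; linarith
          simp only [Pv, Finset.filter_insert, if_pos hfx, if_neg e2, h1, h2]
      calc (V'.filter (fun σ' => ρ σ' = σ)).card
          ≤ ({(insert f σ.1, σ.2), (σ.1, insert f σ.2), (σ.1, σ.2)} :
              Finset (Finset (E2 × ℝ) × Finset (E2 × ℝ))).card := Finset.card_le_card hsub
        _ ≤ 3 := by
            apply le_trans (Finset.card_insert_le _ _)
            apply Nat.succ_le_succ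
            apply le_trans (Finset.card_insert_le _ _)
            simp
    have hfib1 : ∀ σ ∈ V, σ ∉ Vz → (V'.filter (fun σ' => ρ σ' = σ)).card ≤ 1 := by
      intro σ hσ hσz
      rw [Finset.card_le_one]
      intro σ₁ hσ₁ σ₂ hσ₂
      obtain ⟨hσ₁V, hρ₁⟩ := Finset.mem_filter.1 hσ₁
      obtain ⟨hσ₂V, hρ₂⟩ := Finset.mem_filter.1 hσ₂
      rw [hV', Set.Finite.mem_toFinset] at hσ₁V hσ₂V
      obtain ⟨x, rfl⟩ := hσ₁V
      obtain ⟨y, rfl⟩ := hσ₂V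
      have hPx : Pv F x = σ := by rw [← hρ₁]; exact (Pv_insert f F hfF x).symm
      have hPy : Pv F y = σ := by rw [← hρ₂]; exact (Pv_insert f F hfF y).symm
      have hnz : ∀ w : E2, Pv F w = σ → ⟪f.1, w⟫ - f.2 ≠ 0 := by
        intro w hw hc
        exact hσz (Finset.mem_filter.2 ⟨hσ, ⟨w, hc, hw⟩⟩)
      have hnx := hnz x hPx
      have hny := hnz y hPy
      have hsame : (0 < ⟪f.1, x⟫ - f.2) ↔ (0 < ⟪f.1, y⟫ - f.2) := by
        constructor <;> intro h
        · by_contra hc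
          have hylt : ⟪f.1, y⟫ - f.2 < 0 := lt_of_le_of_ne (not_lt.1 hc) hny
          obtain ⟨z, hz0, hzP⟩ := Pv_mid F f.1 f.2 x y (hPx.trans hPy.symm) h hylt
          exact hnz z (hzP.trans hPx) hz0
        · by_contra hc
          have hxlt : ⟪f.1, x⟫ - f.2 < 0 := lt_of_le_of_ne (not_lt.1 hc) hnx
          obtain ⟨z, hz0, hzP⟩ := Pv_mid F f.1 f.2 y x (hPy.trans hPx.symm) h hxlt
          exact hnz z (hzP.trans hPy) hz0
      have hxy : Pv F x = Pv F y := hPx.trans hPy.symm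
      have e1 : F.filter (fun ab => 0 < ⟪ab.1, x⟫ - ab.2) =
          F.filter (fun ab => 0 < ⟪ab.1, y⟫ - ab.2) := by
        have := congrArg Prod.fst hxy
        rwa [Pv_fst, Pv_fst] at this
      have e2 : F.filter (fun ab => ⟪ab.1, x⟫ - ab.2 = 0) =
          F.filter (fun ab => ⟪ab.1, y⟫ - ab.2 = 0) := by
        have := congrArg Prod.snd hxy
        rwa [Pv_snd, Pv_snd] at this
      by_cases hx : 0 < ⟪f.1, x⟫ - f.2
      · have hy : 0 < ⟪f.1, y⟫ - f.2 := hsame.1 hx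
        have ex : ¬ (⟪f.1, x⟫ - f.2 = 0) := hnx
        have ey : ¬ (⟪f.1, y⟫ - f.2 = 0) := hny
        simp only [Pv, Finset.filter_insert, if_pos hx, if_pos hy, if_neg ex, if_neg ey, e1, e2]
      · have hy : ¬ (0 < ⟪f.1, y⟫ - f.2) := fun h => hx (hsame.2 h)
        simp only [Pv, Finset.filter_insert, if_neg hx, if_neg hy, if_neg hnx, if_neg hny, e1, e2]
    -- sum bound
    have hsum : V'.card ≤ V.card + 3 * Vz.card := by
      rw [hfib]
      calc ∑ σ ∈ V, (V'.filter (fun σ' => ρ σ' = σ)).card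
          ≤ ∑ σ ∈ V, (if σ ∈ Vz then 3 else 1) := by
            apply Finset.sum_le_sum
            intro σ hσ
            by_cases h : σ ∈ Vz
            · rw [if_pos h]; exact hfib3 σ hσ
            · rw [if_neg h]; exact hfib1 σ hσ h
        _ = 3 * (V.filter (fun σ => σ ∈ Vz)).card + 1 * (V.filter (fun σ => σ ∉ Vz)).card := by
            rw [Finset.sum_ite, Finset.sum_const, Finset.sum_const, smul_eq_mul, smul_eq_mul,
              mul_comm, mul_comm (V.filter _).card]
        _ ≤ 3 * Vz.card + V.card := by
            have he : V.filter (fun σ => σ ∈ Vz) = Vz := by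
              apply Finset.Subset.antisymm
              · intro σ hσ; exact (Finset.mem_filter.1 hσ).2
              · intro σ hσ; exact Finset.mem_filter.2 ⟨(Finset.mem_filter.1 hσ).1, hσ⟩
            rw [he, one_mul]
            exact Nat.add_le_add_left (Finset.card_filter_le _ _) _
        _ = V.card + 3 * Vz.card := by ring
    -- 1D bound for Vz
    have hVz : Vz.card ≤ 2 * (F.card + 1) := by
      set Q1 : ℝ → Finset (E2 × ℝ) × Finset (E2 × ℝ) := fun t =>
        (F.filter (fun cd => 0 < (⟪cd.1, x₀⟫ - cd.2) + t * ⟪cd.1, v⟫),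
         F.filter (fun cd => (⟪cd.1, x₀⟫ - cd.2) + t * ⟪cd.1, v⟫ = 0)) with hQ1
      have hQP : ∀ t : ℝ, Pv F (x₀ + t • v) = Q1 t := by
        intro t
        simp only [Pv, hQ1]
        have hin : ∀ cd : E2 × ℝ, ⟪cd.1, x₀ + t • v⟫ - cd.2 =
            (⟪cd.1, x₀⟫ - cd.2) + t * ⟪cd.1, v⟫ := by
          intro cd
          rw [inner_add_right, real_inner_smul_right]; ring
        refine Prod.ext ?_ ?_ <;> apply Finset.filter_congr <;> intro cd _ <;> rw [hin]
      have hsubz : ↑Vz ⊆ Set.range Q1 := by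
        intro σ hσ
        rw [Finset.mem_coe, hVz, Finset.mem_filter] at hσ
        obtain ⟨-, x, hx0, hPx⟩ := hσ
        obtain ⟨t, rfl⟩ := hpar x (by linarith)
        exact ⟨t, (hQP t).symm.trans hPx⟩
      have hfinQ : (Set.range Q1).Finite := by
        apply Set.Finite.subset (Finset.finite_toSet (F.powerset ×ˢ F.powerset))
        rintro _ ⟨t, rfl⟩
        simp only [Finset.coe_product, Set.mem_prod, Finset.mem_coe, Finset.mem_powerset]
        exact ⟨Finset.filter_subset _ _, Finset.filter_subset _ _⟩
      calc Vz.card = (↑Vz : Set (Finset (E2 × ℝ) × Finset (E2 × ℝ))).ncard :=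
            (Set.ncard_coe_finset _).symm
        _ ≤ (Set.range Q1).ncard := Set.ncard_le_ncard hsubz hfinQ
        _ ≤ 2 * (F.card + 1) := oneD F _ _
    -- conclude
    rw [← hV'card]
    have hcard : (insert f F).card = F.card + 1 := Finset.card_insert_of_notMem hfF
    rw [hcard]
    calc V'.card ≤ V.card + 3 * Vz.card := hsum
      _ ≤ (3 * F.card ^ 2 + 3 * F.card + 1) + 3 * (2 * (F.card + 1)) := by
          rw [hVcard]
          exact Nat.add_le_add ihb (Nat.mul_le_mul_left 3 hVz)
      _ ≤ 3 * (F.card + 1) ^ 2 + 3 * (F.card + 1) + 1 := by ring_nf; omega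

lemma inner_linear (a : E2) : IsLinearMap ℝ (fun x : E2 => ⟪a, x⟫) :=
  ⟨fun x y => inner_add_right _ _ _, fun c x => real_inner_smul_right _ _ _⟩

lemma meets_iff (a : E2) (b : ℝ) (p q r : E2) :
    ({y : E2 | ⟪a, y⟫ = b} ∩ convexHull ℝ {p, q, r}).Nonempty ↔
      (¬(0 < ⟪a, p⟫ - b ∧ 0 < ⟪a, q⟫ - b ∧ 0 < ⟪a, r⟫ - b) ∧
        ¬(⟪a, p⟫ - b < 0 ∧ ⟪a, q⟫ - b < 0 ∧ ⟪a, r⟫ - b < 0)) := by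
  constructor
  · rintro ⟨z, hz1, hz2⟩
    have hz1' : ⟪a, z⟫ = b := hz1
    constructor
    · rintro ⟨hp, hq, hr⟩
      have hcv : Convex ℝ {x : E2 | b < ⟪a, x⟫} := convex_halfSpace_gt (inner_linear a) b
      have hsub : ({p, q, r} : Set E2) ⊆ {x : E2 | b < ⟪a, x⟫} := by
        intro u hu
        rcases hu with rfl | rfl | rfl <;> simp only [Set.mem_setOf_eq] <;> linarith
      have := convexHull_min hsub hcv hz2
      simp only [Set.mem_setOf_eq] at this
      linarith
    · rintro ⟨hp, hq, hr⟩
      have hcv : Convex ℝ {x : E2 | ⟪a, x⟫ < b} := convex_halfSpace_lt (inner_linear a) b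
      have hsub : ({p, q, r} : Set E2) ⊆ {x : E2 | ⟪a, x⟫ < b} := by
        intro u hu
        rcases hu with rfl | rfl | rfl <;> simp only [Set.mem_setOf_eq] <;> linarith
      have := convexHull_min hsub hcv hz2
      simp only [Set.mem_setOf_eq] at this
      linarith
  · rintro ⟨h1, h2⟩
    have hu : ∃ u ∈ ({p, q, r} : Set E2), ⟪a, u⟫ - b ≤ 0 := by
      by_contra hc
      push_neg at hc
      exact h1 ⟨hc p (by simp), hc q (by simp), hc r (by simp)⟩
    have hw : ∃ w ∈ ({p, q, r} : Set E2), 0 ≤ ⟪a, w⟫ - b := by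
      by_contra hc
      push_neg at hc
      exact h2 ⟨hc p (by simp), hc q (by simp), hc r (by simp)⟩
    obtain ⟨u, huM, hule⟩ := hu
    obtain ⟨w, hwM, hwge⟩ := hw
    have huH : u ∈ convexHull ℝ ({p, q, r} : Set E2) := subset_convexHull ℝ _ huM
    have hwH : w ∈ convexHull ℝ ({p, q, r} : Set E2) := subset_convexHull ℝ _ hwM
    rcases eq_or_lt_of_le hule with hu0 | hult
    · exact ⟨u, by simpa [Set.mem_setOf_eq] using (by linarith : ⟪a, u⟫ = b), huH⟩
    rcases eq_or_lt_of_le hwge with hw0 | hwgt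
    · exact ⟨w, by simpa [Set.mem_setOf_eq] using (by linarith : ⟪a, w⟫ = b), hwH⟩
    -- now ⟪a,u⟫ - b < 0 < ⟪a,w⟫ - b
    set fw : ℝ := ⟪a, w⟫ - b with hfw
    set fu : ℝ := ⟪a, u⟫ - b with hfu
    have hden : fw - fu ≠ 0 := ne_of_gt (by linarith)
    set θ : ℝ := fw / (fw - fu) with hθdef
    have hθ0 : 0 < θ := div_pos hwgt (by linarith)
    have hθ1 : θ < 1 := by
      rw [hθdef, div_lt_one (by linarith)]
      linarith
    refine ⟨w + θ • (u - w), ?_, ?_⟩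
    · show ⟪a, w + θ • (u - w)⟫ = b
      rw [affine_inner]
      have heq : ⟪a, w⟫ + θ * (⟪a, u⟫ - ⟪a, w⟫) - b = fw + θ * (fu - fw) := by
        rw [hfw, hfu]; ring
      have : fw + θ * (fu - fw) = 0 := by
        rw [hθdef]
        field_simp
        ring
      linarith [heq, this]
    · have hseg : w + θ • (u - w) ∈ segment ℝ w u := by
        refine ⟨1 - θ, θ, by linarith, by linarith, by ring, ?_⟩
        rw [smul_sub, sub_smul, one_smul]
        abel
      exact (convex_convexHull ℝ _).segment_subset hwH huH hseg

open Classical in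
theorem triangle_line_subsets_bound :
    ∃ C : ℕ, 0 < C ∧
      ∀ (m : ℕ), 1 ≤ m →
        ∀ (L : Finset (EuclideanSpace ℝ (Fin 2) × ℝ)),
          L.card = m →
          (∀ ab ∈ L, ab.1 ≠ 0) →
          {S : Finset (EuclideanSpace ℝ (Fin 2) × ℝ) |
            ∃ p q r : EuclideanSpace ℝ (Fin 2),
              S = L.filter (fun ab =>
                ({y : EuclideanSpace ℝ (Fin 2) | ⟪ab.1, y⟫ = ab.2} ∩
                  convexHull ℝ {p, q, r}).Nonempty)}.ncard ≤ C * m ^ 6 := by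
  refine ⟨343, by norm_num, ?_⟩
  intro m hm L hLm hL0
  classical
  set T : E2 × E2 × E2 → Finset (E2 × ℝ) := fun w =>
    L.filter (fun ab =>
      ({y : E2 | ⟪ab.1, y⟫ = ab.2} ∩ convexHull ℝ {w.1, w.2.1, w.2.2}).Nonempty) with hT
  have hsetT : {S : Finset (E2 × ℝ) |
      ∃ p q r : E2, S = L.filter (fun ab =>
        ({y : E2 | ⟪ab.1, y⟫ = ab.2} ∩ convexHull ℝ {p, q, r}).Nonempty)} = Set.range T := by
    ext S
    simp only [Set.mem_setOf_eq, Set.mem_range, hT, Prod.exists]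
    constructor
    · rintro ⟨p, q, r, h⟩
      exact ⟨p, q, r, h.symm⟩
    · rintro ⟨p, q, r, h⟩
      exact ⟨p, q, r, h.symm⟩
  rw [hsetT]
  set PP := Finset (E2 × ℝ) × Finset (E2 × ℝ)
  set P3 : E2 × E2 × E2 → PP × PP × PP := fun w => (Pv L w.1, Pv L w.2.1, Pv L w.2.2) with hP3
  set G : PP × PP × PP → Finset (E2 × ℝ) := fun τ =>
    L.filter (fun ab =>
      ¬(ab ∈ τ.1.1 ∧ ab ∈ τ.2.1.1 ∧ ab ∈ τ.2.2.1) ∧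
      ¬((ab ∉ τ.1.1 ∧ ab ∉ τ.1.2) ∧ (ab ∉ τ.2.1.1 ∧ ab ∉ τ.2.1.2) ∧
        (ab ∉ τ.2.2.1 ∧ ab ∉ τ.2.2.2))) with hG
  have hneg : ∀ c : ℝ, c < 0 ↔ (¬ 0 < c ∧ ¬ c = 0) := fun c =>
    ⟨fun h => ⟨by linarith, by intro h'; linarith⟩,
     fun ⟨h1, h2⟩ => lt_of_le_of_ne (not_lt.1 h1) h2⟩
  have hTG : T = G ∘ P3 := by
    funext w
    simp only [hT, hG, hP3, Function.comp]
    apply Finset.filter_congr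
    intro ab hab
    rw [meets_iff]
    simp only [Pv_fst, Pv_snd, Finset.mem_filter, hab, true_and,
      hneg (⟪ab.1, w.1⟫ - ab.2), hneg (⟪ab.1, w.2.1⟫ - ab.2), hneg (⟪ab.1, w.2.2⟫ - ab.2)]
  set W : Finset PP := (range_Pv_finite L).toFinset with hW
  have hsub3 : Set.range P3 ⊆ ↑(W ×ˢ W ×ˢ W) := by
    rintro _ ⟨w, rfl⟩
    simp only [Finset.coe_product, Set.mem_prod, Finset.mem_coe, hW, Set.Finite.mem_toFinset]
    exact ⟨⟨w.1, rfl⟩, ⟨w.2.1, rfl⟩, ⟨w.2.2, rfl⟩⟩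
  have hfin3 : (Set.range P3).Finite := Set.Finite.subset (Finset.finite_toSet _) hsub3
  have hWcard : W.card ≤ 7 * m ^ 2 := by
    have h1 : W.card = (Set.range (Pv L)).ncard := (Set.ncard_eq_toFinset_card _ _).symm
    have h2 := arr L hL0
    rw [hLm] at h2
    rw [h1]
    calc (Set.range (Pv L)).ncard ≤ 3 * m ^ 2 + 3 * m + 1 := h2
      _ ≤ 7 * m ^ 2 := by nlinarith
  calc (Set.range T).ncard
      = (G '' Set.range P3).ncard := by rw [hTG, Set.range_comp]
    _ ≤ (Set.range P3).ncard := Set.ncard_image_le hfin3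
    _ ≤ (↑(W ×ˢ W ×ˢ W) : Set (PP × PP × PP)).ncard :=
        Set.ncard_le_ncard hsub3 (Finset.finite_toSet _)
    _ = W.card * (W.card * W.card) := by
        rw [Set.ncard_coe_finset, Finset.card_product, Finset.card_product]
    _ ≤ (7 * m ^ 2) * ((7 * m ^ 2) * (7 * m ^ 2)) :=
        Nat.mul_le_mul hWcard (Nat.mul_le_mul hWcard hWcard)
    _ = 343 * m ^ 6 := by ring
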